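/- arXiv:2012.03350 — 2 statements merged into one kernel-verified Lean document; each statement's English description precedes it below -/
import Mathlib

section
/- For a Haar-random matrix g ∈ O(d) and any two p-element subsets S, T of {1,…,d}, the expectation of the squared minor det(g[S,T])² (rows S, columns T) of g equals 1/C(d,p). -/
/-!
Fix the column set `T` and let `A = g[·,T]`, a `d × p` matrix with `Aᵀ A = 1`. By Cauchy–Binet,
`1 = det (Aᵀ A) = ∑_S det (g[S,T])²`, the sum running over the `C(d,p)` row sets `S`. Permuting
rows is left multiplication by a permutation matrix, which lies in `O(d)`, so by left invariance
of Haar measure every term of this sum has the same expectation, namely `1 / C(d,p)`.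
-/

open MeasureTheory

noncomputable instance (d : ℕ) :
    MeasurableSpace (Matrix.unitaryGroup (Fin d) ℝ) := borel _

instance (d : ℕ) : BorelSpace (Matrix.unitaryGroup (Fin d) ℝ) := ⟨rfl⟩

open Finset Equiv

theorem Finset.sum_filter_injective_eq_sum_perm {α M : Type*} [Fintype α] [LinearOrder α]
    [AddCommMonoid M] {p : ℕ} (φ : (Fin p → α) → M) :
    ∑ f : Fin p → α with f.Injective, φ f =
      ∑ s : {s : Finset α // s.card = p}, ∑ σ : Perm (Fin p), φ (s.1.orderEmbOfFin s.2 ∘ σ) := by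
  rw [← Fintype.sum_prod_type']
  symm
  refine Finset.sum_nbij (fun x => x.1.1.orderEmbOfFin x.1.2 ∘ x.2) ?_ ?_ ?_ fun _ _ => rfl
  · intro x _
    simpa using (x.1.1.orderEmbOfFin x.1.2).injective.comp x.2.injective
  · rintro ⟨⟨s, hs⟩, σ⟩ _ ⟨⟨t, ht⟩, τ⟩ _ h
    have hst : s = t := by
      have h' := congrArg Set.range h
      simp only [σ.surjective.range_comp, τ.surjective.range_comp, range_orderEmbOfFin] at h'
      exact_mod_cast h'
    subst hst
    simp only [Prod.mk.injEq, true_and]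
    exact Equiv.ext fun i => (s.orderEmbOfFin hs).injective (congrFun h i)
  · intro f hf
    have hinj : f.Injective := by simpa using hf
    set s := univ.image f
    have hs : s.card = p := by simp [s, card_image_of_injective _ hinj]
    let σ : Perm (Fin p) := Equiv.ofBijective (fun i => (s.orderIsoOfFin hs).symm
        ⟨f i, mem_image_of_mem f (mem_univ i)⟩) <| by
      rw [← Finite.injective_iff_bijective]
      intro i j hij
      simpa using hinj (congrArg Subtype.val ((s.orderIsoOfFin hs).symm.injective hij))
    refine ⟨⟨⟨s, hs⟩, σ⟩, mem_coe.2 (mem_univ _), funext fun i => ?_⟩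
    simp [σ, ← coe_orderIsoOfFin_apply]

theorem Finset.exists_perm_comp_orderEmbOfFin {α : Type*} [Fintype α] [LinearOrder α] {p : ℕ}
    (s t : Finset α) (hs : s.card = p) (ht : t.card = p) :
    ∃ σ : Perm α, σ ∘ s.orderEmbOfFin hs = t.orderEmbOfFin ht := by
  refine ⟨((s.orderIsoOfFin hs).symm.toEquiv.trans (t.orderIsoOfFin ht).toEquiv).extendSubtype,
    funext fun i => ?_⟩
  rw [Function.comp_apply, extendSubtype_apply_of_mem _ _ (orderEmbOfFin_mem s hs i)]
  simp [← coe_orderIsoOfFin_apply]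

namespace Matrix

variable {R n : Type*} [CommRing R] [Fintype n] {p : ℕ}

theorem det_mul_eq_sum_filter_injective [DecidableEq n] (A : Matrix (Fin p) n R)
    (B : Matrix n (Fin p) R) :
    (A * B).det = ∑ f : Fin p → n with f.Injective, (∏ i, A i (f i)) * (B.submatrix f id).det := by
  have hrows : (A * B).det = detRowAlternating (fun i => ∑ k, A i k • B k) := by
    congr 1
    ext i j
    simp [mul_apply]
  rw [hrows, ← AlternatingMap.coe_multilinearMap, MultilinearMap.map_sum]
  refine (sum_subset (filter_subset _ _) fun f _ hf => ?_).symm.trans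
    (sum_congr rfl fun f _ => ?_)
  · have hf' : ¬ (B ∘ f).Injective := fun h => by simp_all [h.of_comp]
    rw [MultilinearMap.map_smul_univ, AlternatingMap.coe_multilinearMap]
    exact smul_eq_zero_of_right _ (detRowAlternating.map_eq_zero_of_not_injective _ hf')
  · rw [MultilinearMap.map_smul_univ, smul_eq_mul]
    rfl

theorem det_mul_eq_sum_det_submatrix [LinearOrder n] (A : Matrix (Fin p) n R)
    (B : Matrix n (Fin p) R) :
    (A * B).det = ∑ s : {s : Finset n // s.card = p},
      (A.submatrix id (s.1.orderEmbOfFin s.2)).det *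
        (B.submatrix (s.1.orderEmbOfFin s.2) id).det := by
  rw [det_mul_eq_sum_filter_injective, sum_filter_injective_eq_sum_perm]
  refine sum_congr rfl fun s _ => ?_
  rw [← det_transpose, det_apply', sum_mul]
  refine sum_congr rfl fun σ _ => ?_
  rw [show B.submatrix (s.1.orderEmbOfFin s.2 ∘ σ) id =
    (B.submatrix (s.1.orderEmbOfFin s.2) id).submatrix σ id from rfl, det_permute]
  simp only [transpose_apply, submatrix_apply, id, Function.comp_apply]
  ring

theorem sum_sq_det_submatrix_of_transpose_mul_self [LinearOrder n] {A : Matrix n (Fin p) R}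
    (hA : Aᵀ * A = 1) :
    ∑ s : {s : Finset n // s.card = p}, (A.submatrix (s.1.orderEmbOfFin s.2) id).det ^ 2 = 1 := by
  have h := det_mul_eq_sum_det_submatrix Aᵀ A
  rw [hA, det_one] at h
  rw [h]
  refine sum_congr rfl fun s _ => ?_
  rw [← transpose_submatrix, det_transpose, sq]

end Matrix

namespace Matrix

variable {n : Type*} [Fintype n] {p : ℕ} {E : Type*} [NormedAddCommGroup E] [NormedSpace ℝ E]

theorem permMatrix_mem_unitaryGroup [DecidableEq n] (σ : Perm n) :
    σ.permMatrix ℝ ∈ unitaryGroup n ℝ := by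
  rw [mem_unitaryGroup_iff, star_eq_conjTranspose, conjTranspose_permMatrix, ← permMatrix_mul,
    inv_mul_cancel, permMatrix_one]

theorem integral_unitaryGroup_submatrix_perm [DecidableEq n]
    [MeasurableSpace (unitaryGroup n ℝ)] [MeasurableMul (unitaryGroup n ℝ)]
    (μ : Measure (unitaryGroup n ℝ)) [μ.IsMulLeftInvariant] (F : Matrix n n ℝ → E) (σ : Perm n) :
    ∫ g, F ((g : Matrix n n ℝ).submatrix σ id) ∂μ = ∫ g, F g ∂μ := by
  simpa [UnitaryGroup.mul_val, Perm.permMatrix, PEquiv.toMatrix_toPEquiv_mul] using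
    integral_mul_left_eq_self (μ := μ) (fun g => F g) ⟨_, permMatrix_mem_unitaryGroup σ⟩

variable [LinearOrder n]

theorem integral_unitaryGroup_submatrix_orderEmbOfFin_eq
    [MeasurableSpace (unitaryGroup n ℝ)] [MeasurableMul (unitaryGroup n ℝ)]
    (μ : Measure (unitaryGroup n ℝ)) [μ.IsMulLeftInvariant] {m : Type*}
    (F : Matrix (Fin p) m ℝ → E) (c : m → n) {s t : Finset n} (hs : s.card = p)
    (ht : t.card = p) :
    ∫ g, F ((g : Matrix n n ℝ).submatrix (s.orderEmbOfFin hs) c) ∂μ =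
      ∫ g, F ((g : Matrix n n ℝ).submatrix (t.orderEmbOfFin ht) c) ∂μ := by
  obtain ⟨σ, hσ⟩ := s.exists_perm_comp_orderEmbOfFin t hs ht
  simpa [← hσ, submatrix_submatrix] using
    (integral_unitaryGroup_submatrix_perm μ (fun g => F (g.submatrix (s.orderEmbOfFin hs) c)) σ).symm

theorem sum_sq_det_submatrix_unitaryGroup (g : unitaryGroup n ℝ) {c : Fin p → n}
    (hc : c.Injective) :
    ∑ s : {s : Finset n // s.card = p},
      ((g : Matrix n n ℝ).submatrix (s.1.orderEmbOfFin s.2) c).det ^ 2 = 1 := by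
  have hg : (g : Matrix n n ℝ)ᵀ * g = 1 := by
    simpa [star_eq_conjTranspose] using UnitaryGroup.star_mul_self g
  have hcols : ((g : Matrix n n ℝ).submatrix id c)ᵀ * (g : Matrix n n ℝ).submatrix id c = 1 := by
    rw [transpose_submatrix, ← submatrix_mul _ _ _ id _ Function.bijective_id, hg,
      submatrix_one _ hc]
  exact sum_sq_det_submatrix_of_transpose_mul_self hcols

end Matrix

theorem integral_eq_one_div_card_of_sum_eq_one {α ι : Type*} [MeasurableSpace α] [Fintype ι]
    {μ : Measure α} [IsProbabilityMeasure μ] {f : ι → α → ℝ}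
    (hmeas : ∀ i, AEStronglyMeasurable (f i) μ) (hnonneg : ∀ i x, 0 ≤ f i x)
    (hsum : ∀ x, ∑ i, f i x = 1) (hconst : ∀ i j, ∫ x, f i x ∂μ = ∫ x, f j x ∂μ) (i : ι) :
    ∫ x, f i x ∂μ = 1 / Fintype.card ι := by
  have hint : ∀ j, Integrable (f j) μ := fun j =>
    .of_bound (hmeas j) 1 <| ae_of_all _ fun x => by
      rw [Real.norm_of_nonneg (hnonneg j x), ← hsum x]
      exact single_le_sum (fun k _ => hnonneg k x) (mem_univ j)
  refine eq_one_div_of_mul_eq_one_right ?_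
  calc (Fintype.card ι : ℝ) * ∫ x, f i x ∂μ = ∑ j, ∫ x, f j x ∂μ := by
        simp [hconst _ i]
    _ = ∫ x, ∑ j, f j x ∂μ := (integral_finsetSum _ fun j _ => hint j).symm
    _ = 1 := by simp [hsum]

theorem expected_sq_minor_orthogonal_general (d p : ℕ)
    (μ : Measure (Matrix.unitaryGroup (Fin d) ℝ))
    [μ.IsHaarMeasure] [IsProbabilityMeasure μ]
    (S T : Finset (Fin d)) (hS : S.card = p) (hT : T.card = p) :
    ∫ g, (Matrix.det ((g : Matrix (Fin d) (Fin d) ℝ).submatrix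
        (S.orderEmbOfFin hS) (T.orderEmbOfFin hT))) ^ 2 ∂μ =
      1 / (d.choose p : ℝ) := by
  set c := T.orderEmbOfFin hT
  let minorSq (s : {s : Finset (Fin d) // s.card = p}) (g : Matrix.unitaryGroup (Fin d) ℝ) : ℝ :=
    ((g : Matrix (Fin d) (Fin d) ℝ).submatrix (s.1.orderEmbOfFin s.2) c).det ^ 2
  have hmeas : ∀ s, AEStronglyMeasurable (minorSq s) μ := fun _ =>
    ((continuous_subtype_val.matrix_submatrix _ _).matrix_det.pow 2).aestronglyMeasurable
  have hsum : ∀ g, ∑ s, minorSq s g = 1 := fun g =>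
    Matrix.sum_sq_det_submatrix_unitaryGroup g c.injective
  have hconst : ∀ s t, ∫ g, minorSq s g ∂μ = ∫ g, minorSq t g ∂μ := fun s t =>
    Matrix.integral_unitaryGroup_submatrix_orderEmbOfFin_eq μ (fun M => M.det ^ 2) c s.2 t.2
  have key := integral_eq_one_div_card_of_sum_eq_one hmeas (fun _ _ => sq_nonneg _) hsum hconst
    ⟨S, hS⟩
  rwa [Fintype.card_finset_len, Fintype.card_fin] at key

/-- For a Haar-random `g ∈ O(d)` and any `p`-element subsets `S, T` of the index
set, the expectation of the squared minor `det (g[S,T])²` equals `1 / C(d,p)`. -/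
theorem expected_sq_minor_orthogonal (d p : ℕ) (hpd : p ≤ d)
    (μ : Measure (Matrix.unitaryGroup (Fin d) ℝ))
    [μ.IsHaarMeasure] [IsProbabilityMeasure μ]
    (S T : Finset (Fin d)) (hS : S.card = p) (hT : T.card = p) :
    ∫ g, (Matrix.det ((g : Matrix (Fin d) (Fin d) ℝ).submatrix
        (S.orderEmbOfFin hS) (T.orderEmbOfFin hT))) ^ 2 ∂μ =
      1 / (d.choose p : ℝ) :=
  expected_sq_minor_orthogonal_general d p μ S T hS hT
end

section
/- Let L₀ be a p-dimensional subspace of ℝ^d and L another p-dimensional subspace. If the orthogonal projection π: L → L₀ is a bijection scaling p-dimensional volume by a factor t ∈ (0,1], then the orthogonal projection from the orthogonal complement L^⊥ (a (d−p)-dimensional subspace) onto L₀^⊥ also scales (d−p)-dimensional volume by the same factor t. -/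
/-!
The orthogonal projection of `M` onto `N` scales `(dim M)`-dimensional Hausdorff measure by its
`LinearMap.normDet`, the absolute determinant of its matrix `(⟪cᵢ, bⱼ⟫)` in orthonormal bases `b`
of `M` and `c` of `N`; testing on a unit ball of `L` shows that `t` is this factor for `L → L₀`.
Orthonormal bases of `E` adapted to `L ⊕ Lᗮ` and to `L₀ ⊕ L₀ᗮ` differ by an orthogonal matrix `Q`
whose diagonal blocks are the matrices of `L → L₀` and `Lᗮ → L₀ᗮ`, so Jacobi's identity
`det Q * det Q₁₁ = det Q₂₂` for complementary minors of an orthogonal matrix, together with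
`|det Q| = 1`, shows that the two projections have the same `normDet`.
-/

open MeasureTheory Module
open scoped RealInnerProductSpace ENNReal Matrix

theorem Matrix.det_mul_det_toBlocks₁₁_of_mul_transpose_eq_one {m n R : Type*}
    [Fintype m] [Fintype n] [DecidableEq m] [DecidableEq n] [CommRing R]
    {Q : Matrix (m ⊕ n) (m ⊕ n) R} (hQ : Q * Qᵀ = 1) :
    Q.det * Q.toBlocks₁₁.det = Q.toBlocks₂₂.det := by
  obtain ⟨A, B, C, D, rfl⟩ : ∃ A B C D, Q = fromBlocks A B C D :=
    ⟨_, _, _, _, (fromBlocks_toBlocks Q).symm⟩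
  rw [fromBlocks_transpose, fromBlocks_multiply, ← fromBlocks_one, fromBlocks_inj] at hQ
  obtain ⟨hAB, -, hCD, -⟩ := hQ
  have hmul : fromBlocks A B C D * fromBlocks Aᵀ 0 Bᵀ 1 = fromBlocks 1 B 0 D := by
    rw [fromBlocks_multiply, hAB, hCD]
    simp
  simpa [det_fromBlocks_zero₁₂, det_fromBlocks_zero₂₁] using congrArg det hmul

variable {E : Type*} [NormedAddCommGroup E] [InnerProductSpace ℝ E] {ι κ : Type*}

theorem Orthonormal.sumElim {v : ι → E} {w : κ → E} (hv : Orthonormal ℝ v)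
    (hw : Orthonormal ℝ w) (hvw : ∀ i j, ⟪v i, w j⟫ = 0) : Orthonormal ℝ (Sum.elim v w) := by
  classical
  rw [orthonormal_iff_ite] at *
  rintro (i | i) (j | j) <;> simp [hv, hw, hvw, real_inner_comm (v _)]

namespace OrthonormalBasis

variable [Fintype ι] [Fintype κ] {K : Submodule ℝ E}

theorem orthonormal_sumElim_orthogonal (b : OrthonormalBasis ι ℝ K)
    (b' : OrthonormalBasis κ ℝ Kᗮ) :
    Orthonormal ℝ (Sum.elim (fun i => (b i : E)) (fun j => (b' j : E))) :=
  (b.orthonormal.comp_linearIsometry K.subtypeₗᵢ).sumElim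
    (b'.orthonormal.comp_linearIsometry Kᗮ.subtypeₗᵢ)
    fun i j => K.inner_right_of_mem_orthogonal (b i).2 (b' j).2

variable [FiniteDimensional ℝ E]

noncomputable def sumOrthogonal (b : OrthonormalBasis ι ℝ K) (b' : OrthonormalBasis κ ℝ Kᗮ) :
    OrthonormalBasis (ι ⊕ κ) ℝ E :=
  .mk (orthonormal_sumElim_orthogonal b b') <|
    ((orthonormal_sumElim_orthogonal b b').linearIndependent.span_eq_top_of_card_eq_finrank' <| by
      rw [Fintype.card_sum, ← finrank_eq_card_basis b.toBasis, ← finrank_eq_card_basis b'.toBasis,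
        K.finrank_add_finrank_orthogonal]).ge

@[simp]
theorem coe_sumOrthogonal (b : OrthonormalBasis ι ℝ K) (b' : OrthonormalBasis κ ℝ Kᗮ) :
    ⇑(b.sumOrthogonal b') = Sum.elim (fun i => (b i : E)) (fun j => (b' j : E)) :=
  OrthonormalBasis.coe_mk _ _

end OrthonormalBasis

namespace Submodule

noncomputable def orthogonalProjectionRestrict (M N : Submodule ℝ E) [N.HasOrthogonalProjection] :
    M →ₗ[ℝ] N :=
  (N.orthogonalProjectionOnto : E →ₗ[ℝ] N).domRestrict M

@[simp]
theorem orthogonalProjectionRestrict_apply (M N : Submodule ℝ E) [N.HasOrthogonalProjection]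
    (x : M) : M.orthogonalProjectionRestrict N x = N.orthogonalProjectionOnto x := rfl

theorem toMatrix_orthogonalProjectionRestrict_apply [Fintype ι] [DecidableEq ι] [Fintype κ]
    {M N : Submodule ℝ E} [N.HasOrthogonalProjection]
    (b : OrthonormalBasis ι ℝ M) (c : OrthonormalBasis κ ℝ N) (i : κ) (j : ι) :
    (M.orthogonalProjectionRestrict N).toMatrix b.toBasis c.toBasis i j = ⟪(c i : E), b j⟫ := by
  rw [LinearMap.toMatrix_apply, OrthonormalBasis.coe_toBasis_repr_apply,
    OrthonormalBasis.repr_apply_apply, orthogonalProjectionRestrict_apply,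
    inner_orthogonalProjectionOnto_eq_of_mem_left, OrthonormalBasis.coe_toBasis]

section Hausdorff

variable [MeasurableSpace E] [BorelSpace E] {M : Submodule ℝ E} [FiniteDimensional ℝ M]

theorem hausdorffMeasure_image_orthogonalProjectionOnto (N : Submodule ℝ E)
    [N.HasOrthogonalProjection] {s : Set E} (hs : s ⊆ M) :
    μH[finrank ℝ M] ((fun x => (N.orthogonalProjectionOnto x : E)) '' s) =
      ENNReal.ofReal (M.orthogonalProjectionRestrict N).normDet * μH[finrank ℝ M] s := by
  obtain ⟨s, rfl⟩ : ∃ u : Set M, (↑) '' u = s :=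
    ⟨(↑) ⁻¹' s, Set.image_preimage_eq_of_subset (by simpa using hs)⟩
  have hproj : (fun x => (N.orthogonalProjectionOnto x : E)) '' ((↑) '' s) =
      (↑) '' (M.orthogonalProjectionRestrict N '' s) := by
    simp only [Set.image_image]
    rfl
  rw [hproj, isometry_subtype_coe.hausdorffMeasure_image (Or.inl (Nat.cast_nonneg _)),
    LinearMap.hausdorffMeasure_image,
    isometry_subtype_coe.hausdorffMeasure_image (Or.inl (Nat.cast_nonneg _))]

theorem eq_of_forall_mul_hausdorffMeasure_eq {a b : ℝ≥0∞}
    (h : ∀ s ⊆ (M : Set E), a * μH[finrank ℝ M] s = b * μH[finrank ℝ M] s) : a = b := by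
  have h_ball := h ((↑) '' Metric.closedBall (0 : M) 1) (Subtype.coe_image_subset _ _)
  rw [isometry_subtype_coe.hausdorffMeasure_image (Or.inl (Nat.cast_nonneg _))] at h_ball
  exact (ENNReal.mul_left_inj (Metric.measure_closedBall_pos _ _ one_pos).ne'
    (isCompact_closedBall _ _).measure_lt_top.ne).mp h_ball

end Hausdorff

variable [FiniteDimensional ℝ E] {M N : Submodule ℝ E}

theorem finrank_orthogonal_eq_of_finrank_eq (h : finrank ℝ M = finrank ℝ N) :
    finrank ℝ Mᗮ = finrank ℝ Nᗮ := by
  have hM := M.finrank_add_finrank_orthogonal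
  have hN := N.finrank_add_finrank_orthogonal
  omega

theorem normDet_orthogonalProjectionRestrict_orthogonal (h : finrank ℝ M = finrank ℝ N) :
    (Mᗮ.orthogonalProjectionRestrict Nᗮ).normDet = (M.orthogonalProjectionRestrict N).normDet := by
  let b := stdOrthonormalBasis ℝ M
  let c := (stdOrthonormalBasis ℝ N).reindex (finCongr h.symm)
  let b' := stdOrthonormalBasis ℝ Mᗮ
  let c' := (stdOrthonormalBasis ℝ Nᗮ).reindex
    (finCongr (finrank_orthogonal_eq_of_finrank_eq h).symm)
  let Q := (c.sumOrthogonal c').toBasis.toMatrix (b.sumOrthogonal b')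
  have hQ : Q * Qᵀ = 1 := (Matrix.mem_orthogonalGroup_iff _ _).mp
    ((c.sumOrthogonal c').toMatrix_orthonormalBasis_mem_orthogonal (b.sumOrthogonal b'))
  have hQdet : |Q.det| = 1 := by
    have h_pm := (c.sumOrthogonal c').det_to_matrix_orthonormalBasis_real (b.sumOrthogonal b')
    rw [Basis.det_apply] at h_pm
    rcases h_pm with h_pm | h_pm <;> simp only [Q, h_pm, abs_neg, abs_one]
  have hA : Q.toBlocks₁₁ = (M.orthogonalProjectionRestrict N).toMatrix b.toBasis c.toBasis := by
    ext i j
    simp [Q, Matrix.toBlocks₁₁, Basis.toMatrix_apply, OrthonormalBasis.repr_apply_apply,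
      toMatrix_orthogonalProjectionRestrict_apply]
  have hD : Q.toBlocks₂₂ =
      (Mᗮ.orthogonalProjectionRestrict Nᗮ).toMatrix b'.toBasis c'.toBasis := by
    ext i j
    simp [Q, Matrix.toBlocks₂₂, Basis.toMatrix_apply, OrthonormalBasis.repr_apply_apply,
      toMatrix_orthogonalProjectionRestrict_apply]
  rw [LinearMap.normDet_eq_norm_det_toMatrix _ b' c', LinearMap.normDet_eq_norm_det_toMatrix _ b c,
    ← hA, ← hD, ← Matrix.det_mul_det_toBlocks₁₁_of_mul_transpose_eq_one hQ, Real.norm_eq_abs,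
    Real.norm_eq_abs, abs_mul, hQdet, one_mul]

end Submodule

theorem orthogonal_complement_projection_scaling_general (d p : ℕ)
    (t : ℝ)
    (L L₀ : Submodule ℝ (EuclideanSpace ℝ (Fin d)))
    (hL : Module.finrank ℝ L = p) (hL₀ : Module.finrank ℝ L₀ = p)
    (hscale : ∀ s : Set (EuclideanSpace ℝ (Fin d)), s ⊆ (L : Set (EuclideanSpace ℝ (Fin d))) →
      μH[p] ((fun x => (Submodule.orthogonalProjectionOnto L₀ x : EuclideanSpace ℝ (Fin d))) '' s) =
        ENNReal.ofReal t * μH[p] s) :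
    ∀ s : Set (EuclideanSpace ℝ (Fin d)), s ⊆ (Lᗮ : Set (EuclideanSpace ℝ (Fin d))) →
      μH[(d : ℝ) - p] ((fun x => (Submodule.orthogonalProjectionOnto L₀ᗮ x : EuclideanSpace ℝ (Fin d))) '' s) =
        ENNReal.ofReal t * μH[(d : ℝ) - p] s := by
  subst hL
  intro s hs
  have ht : ENNReal.ofReal t = ENNReal.ofReal (L.orthogonalProjectionRestrict L₀).normDet :=
    L.eq_of_forall_mul_hausdorffMeasure_eq fun u hu => by
      rw [← hscale u hu, Submodule.hausdorffMeasure_image_orthogonalProjectionOnto L₀ hu]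
  have hdim : (d : ℝ) - finrank ℝ L = finrank ℝ Lᗮ := by
    rw [sub_eq_iff_eq_add', ← Nat.cast_add, L.finrank_add_finrank_orthogonal,
      finrank_euclideanSpace_fin]
  rw [hdim, Submodule.hausdorffMeasure_image_orthogonalProjectionOnto L₀ᗮ hs, ht,
    Submodule.normDet_orthogonalProjectionRestrict_orthogonal hL₀.symm]

/-- Duality of principal angles: if the orthogonal projection `L → L₀` between
`p`-dimensional subspaces is a bijection scaling `p`-volume by `t ∈ (0,1]`, then
the orthogonal projection `L^⊥ → L₀^⊥` scales `(d−p)`-volume by the same `t`. -/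
theorem orthogonal_complement_projection_scaling (d p : ℕ) (hpd : p ≤ d)
    (t : ℝ) (ht0 : 0 < t) (ht1 : t ≤ 1)
    (L L₀ : Submodule ℝ (EuclideanSpace ℝ (Fin d)))
    (hL : Module.finrank ℝ L = p) (hL₀ : Module.finrank ℝ L₀ = p)
    (hbij : Set.BijOn
      (fun x => (Submodule.orthogonalProjectionOnto L₀ x : EuclideanSpace ℝ (Fin d)))
      (L : Set (EuclideanSpace ℝ (Fin d))) (L₀ : Set (EuclideanSpace ℝ (Fin d))))
    (hscale : ∀ s : Set (EuclideanSpace ℝ (Fin d)), s ⊆ (L : Set (EuclideanSpace ℝ (Fin d))) →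
      μH[p] ((fun x => (Submodule.orthogonalProjectionOnto L₀ x : EuclideanSpace ℝ (Fin d))) '' s) =
        ENNReal.ofReal t * μH[p] s) :
    ∀ s : Set (EuclideanSpace ℝ (Fin d)), s ⊆ (Lᗮ : Set (EuclideanSpace ℝ (Fin d))) →
      μH[(d : ℝ) - p] ((fun x => (Submodule.orthogonalProjectionOnto L₀ᗮ x : EuclideanSpace ℝ (Fin d))) '' s) =
        ENNReal.ofReal t * μH[(d : ℝ) - p] s :=
  orthogonal_complement_projection_scaling_general d p t L L₀ hL hL₀ hscale
end
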